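/- arXiv:2009.12627 — 3 statements merged into one kernel-verified Lean document; each statement's English description precedes it below -/
import Mathlib

section
/- Let B ⊆ ℝⁿ be open, α ∈ (0,1], and let v₁, …, v_ℓ ∈ SC^α(B) be semiconcave functions with exponent α. If the sum v₁ + ⋯ + v_ℓ is differentiable at a point x₀ ∈ B, then each v_j is differentiable at x₀. -/
open scoped RealInnerProductSpace
open Metric Filter

abbrev En (n : ℕ) := EuclideanSpace ℝ (Fin n)

def SemiconcaveOn {n : ℕ} (A : Set (En n)) (α C : ℝ) (u : En n → ℝ) : Prop :=
  ∀ x ∈ A, ∀ y ∈ A, segment ℝ x y ⊆ A → ∀ t ∈ Set.Icc (0:ℝ) 1,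
    t * u x + (1 - t) * u y - u (t • x + (1 - t) • y) ≤ C * t * (1 - t) * ‖x - y‖ ^ (1 + α)

def reachGrad {n : ℕ} (Ω : Set (En n)) (u : En n → ℝ) (x : En n) : Set (En n) :=
  {p | ∃ xs : ℕ → En n, (∀ k, xs k ∈ Ω ∧ DifferentiableAt ℝ u (xs k)) ∧
    Tendsto xs atTop (nhds x) ∧ Tendsto (fun k => gradient u (xs k)) atTop (nhds p)}

def SClocOn {n : ℕ} (A : Set (En n)) (α : ℝ) (u : En n → ℝ) : Prop :=
  LocallyLipschitzOn A u ∧ ∀ K ⊆ A, IsCompact K → ∃ C, SemiconcaveOn K α C u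

/-!
Each semiconcave `vⱼ` has one-sided directional derivatives
`dⱼ h = lim_{t → 0+} (vⱼ (x₀ + t • h) - vⱼ x₀) / t`: semiconcavity makes the difference quotients
nonincreasing in `t` up to an error `O(t ^ α)`, and the Lipschitz bound keeps them bounded.
Semiconcavity at midpoints makes `dⱼ` superadditive, it is positively homogeneous, and
`vⱼ (x₀ + h) - vⱼ x₀ - dⱼ h ≤ Cⱼ ‖h‖ ^ (1 + α)`. When `∑ vⱼ` is differentiable the `dⱼ` add up to
its derivative, an additive map; superadditive functions with additive sum are additive, so each
`dⱼ` is linear. The remainder of `vⱼ` is then `o(‖h‖)` from above by the estimate, and from below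
because it equals the remainder of the sum minus those of the other `vᵢ`.
-/

open Topology

theorem map_add_of_sum_superadditive {ι E M : Type*} [Fintype ι] [Add E] [AddCommGroup M]
    [PartialOrder M] [IsOrderedAddMonoid M] (d : ι → E → M)
    (hsuper : ∀ i a b, d i a + d i b ≤ d i (a + b))
    (hsum : ∀ a b, ∑ i, d i (a + b) = ∑ i, d i a + ∑ i, d i b) (j : ι) (a b : E) :
    d j (a + b) = d j a + d j b := by
  have hgap : ∀ i ∈ Finset.univ, 0 ≤ d i (a + b) - (d i a + d i b) :=
    fun i _ => sub_nonneg.2 (hsuper i a b)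
  have hgap_sum : ∑ i, (d i (a + b) - (d i a + d i b)) = 0 := by
    rw [Finset.sum_sub_distrib, Finset.sum_add_distrib, hsum, sub_self]
  exact (sub_eq_zero.1 ((Finset.sum_eq_zero_iff_of_nonneg hgap).1 hgap_sum j (Finset.mem_univ j)))

theorem isLinearMap_of_map_add_of_map_smul_of_pos {E : Type*} [AddCommGroup E] [Module ℝ E]
    {d : E → ℝ} (hadd : ∀ a b, d (a + b) = d a + d b)
    (hsmul : ∀ c : ℝ, 0 < c → ∀ a, d (c • a) = c * d a) : IsLinearMap ℝ d := by
  have hzero : d 0 = 0 := by simpa using hadd 0 0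
  refine ⟨hadd, fun c a => ?_⟩
  rcases lt_trichotomy c 0 with hc | rfl | hc
  · have hneg : d (c • a) + d ((-c) • a) = 0 := by
      rw [← hadd, ← add_smul, add_neg_cancel, zero_smul, hzero]
    rw [hsmul (-c) (neg_pos.2 hc)] at hneg
    rw [smul_eq_mul]
    linarith
  · simp [hzero]
  · exact hsmul c hc a

theorem tendsto_const_mul_nhdsGT_zero {c : ℝ} (hc : 0 < c) :
    Tendsto (fun t : ℝ => c * t) (𝓝[>] 0) (𝓝[>] 0) := by
  refine tendsto_nhdsWithin_of_tendsto_nhds_of_eventually_within _ ?_ ?_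
  · simpa using ((continuous_const_mul c).tendsto 0).mono_left nhdsWithin_le_nhds
  · filter_upwards [self_mem_nhdsWithin] with t ht using mul_pos hc ht

theorem tendsto_rpow_nhds_zero {α : ℝ} (hα : 0 < α) :
    Tendsto (fun t : ℝ => t ^ α) (𝓝 0) (𝓝 0) := by
  simpa [Real.zero_rpow hα.ne'] using (Real.continuousAt_rpow_const 0 α (Or.inr hα.le)).tendsto

theorem tendsto_mul_rpow_mul_nhdsGT_zero {α : ℝ} (hα : 0 < α) (c N : ℝ) :
    Tendsto (fun t : ℝ => c * t ^ α * N) (𝓝[>] 0) (𝓝 0) := by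
  simpa using (((tendsto_rpow_nhds_zero hα).mono_left nhdsWithin_le_nhds).const_mul c).mul_const N

theorem Asymptotics.isLittleO_norm_rpow_one_add {E : Type*} [SeminormedAddCommGroup E] {α : ℝ}
    (hα : 0 < α) : (fun h : E => ‖h‖ ^ (1 + α)) =o[𝓝 0] (fun h => ‖h‖) := by
  refine Asymptotics.isLittleO_iff.2 fun c hc => ?_
  have hsmall : ∀ᶠ h : E in 𝓝 0, ‖h‖ ^ α ≤ c := by
    have := (tendsto_rpow_nhds_zero hα).comp (tendsto_norm_zero (E := E))
    exact (this.eventually_le_const hc)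
  filter_upwards [hsmall] with h hh
  rw [norm_norm, Real.norm_of_nonneg (by positivity), Real.rpow_add' (norm_nonneg h) (by linarith),
    Real.rpow_one, mul_comm]
  exact mul_le_mul_of_nonneg_right hh (norm_nonneg h)

noncomputable def dirDiffQuot {E : Type*} [AddCommGroup E] [Module ℝ E] (u : E → ℝ) (x₀ h : E)
    (t : ℝ) : ℝ :=
  (u (x₀ + t • h) - u x₀) / t

section DirDiffQuot

variable {E : Type*} [NormedAddCommGroup E] [NormedSpace ℝ E]

theorem add_smul_mem_closedBall {x₀ h : E} {r t : ℝ} (ht : 0 ≤ t) (htr : t * ‖h‖ ≤ r) :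
    x₀ + t • h ∈ closedBall x₀ r := by
  rwa [add_mem_closedBall_iff_norm, norm_smul, Real.norm_of_nonneg ht]

theorem dirDiffQuot_smul (u : E → ℝ) (x₀ h : E) (c t : ℝ) :
    dirDiffQuot u x₀ (c • h) t = c * dirDiffQuot u x₀ h (c * t) := by
  rcases eq_or_ne c 0 with rfl | hc
  · simp [dirDiffQuot]
  rcases eq_or_ne t 0 with rfl | ht
  · simp [dirDiffQuot]
  rw [dirDiffQuot, dirDiffQuot, smul_smul, mul_comm t c]
  field_simp

theorem dirDiffQuot_sum {ι : Type*} (s : Finset ι) (v : ι → E → ℝ) (x₀ h : E) (t : ℝ) :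
    dirDiffQuot (fun x => ∑ i ∈ s, v i x) x₀ h t = ∑ i ∈ s, dirDiffQuot (v i) x₀ h t := by
  simp only [dirDiffQuot, ← Finset.sum_div, Finset.sum_sub_distrib]

theorem Filter.Tendsto.dirDiffQuot_smul {u : E → ℝ} {x₀ h : E} {l c : ℝ}
    (hl : Tendsto (dirDiffQuot u x₀ h) (𝓝[>] 0) (𝓝 l)) (hc : 0 < c) :
    Tendsto (dirDiffQuot u x₀ (c • h)) (𝓝[>] 0) (𝓝 (c * l)) := by
  rw [funext (_root_.dirDiffQuot_smul u x₀ h c)]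
  exact (hl.comp (tendsto_const_mul_nhdsGT_zero hc)).const_mul c

theorem HasFDerivAt.tendsto_dirDiffQuot {u : E → ℝ} {L : E →L[ℝ] ℝ} {x₀ : E}
    (hu : HasFDerivAt u L x₀) (h : E) :
    Tendsto (dirDiffQuot u x₀ h) (𝓝[>] 0) (𝓝 (L h)) := by
  have hslope := hasDerivAt_iff_tendsto_slope.1 (hu.hasLineDerivAt h)
  refine (hslope.mono_left (nhdsWithin_mono _ fun t ht => ne_of_gt ht)).congr fun t => ?_
  simp [slope, dirDiffQuot, div_eq_inv_mul]

theorem LipschitzOnWith.eventually_dirDiffQuot_le {u : E → ℝ} {K : NNReal} {s : Set E} {x₀ : E}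
    (hu : LipschitzOnWith K u s) (hs : s ∈ 𝓝 x₀) (h : E) :
    ∀ᶠ t in 𝓝[>] 0, dirDiffQuot u x₀ h t ≤ K * ‖h‖ := by
  have hline : Tendsto (fun t : ℝ => x₀ + t • h) (𝓝[>] 0) (𝓝 x₀) := by
    have : Continuous (fun t : ℝ => x₀ + t • h) := by fun_prop
    simpa using (this.tendsto 0).mono_left nhdsWithin_le_nhds
  filter_upwards [hline hs, self_mem_nhdsWithin] with t hts (ht : 0 < t)
  have hlip := hu.dist_le_mul _ hts _ (mem_of_mem_nhds hs)
  rw [dist_self_add_left, norm_smul, Real.norm_of_nonneg ht.le] at hlip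
  rw [dirDiffQuot, div_le_iff₀ ht]
  calc u (x₀ + t • h) - u x₀ ≤ dist (u (x₀ + t • h)) (u x₀) := le_abs_self _
    _ ≤ K * (t * ‖h‖) := hlip
    _ = K * ‖h‖ * t := by ring

theorem isLinearMap_of_tendsto_dirDiffQuot {u : E → ℝ} {x₀ : E} {d : E → ℝ}
    (hd : ∀ h, Tendsto (dirDiffQuot u x₀ h) (𝓝[>] 0) (𝓝 (d h)))
    (hadd : ∀ a b, d (a + b) = d a + d b) : IsLinearMap ℝ d :=
  isLinearMap_of_map_add_of_map_smul_of_pos hadd fun _ hc h =>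
    tendsto_nhds_unique (hd _) ((hd h).dirDiffQuot_smul hc)

end DirDiffQuot

theorem exists_tendsto_nhdsGT_zero_of_sub_le {f e : ℝ → ℝ} {M δ : ℝ}
    (he : Tendsto e (𝓝[>] 0) (𝓝 0)) (hbdd : ∀ᶠ t in 𝓝[>] 0, f t ≤ M) (hδ : 0 < δ)
    (hf : ∀ t s, 0 < t → t ≤ s → s ≤ δ → f s - e s ≤ f t) :
    ∃ l, Tendsto f (𝓝[>] 0) (𝓝 l) := by
  set A := (fun s => f s - e s) '' Set.Ioc 0 δ
  have hA : A.Nonempty := ⟨_, δ, ⟨hδ, le_rfl⟩, rfl⟩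
  have hAbdd : BddAbove A := by
    refine ⟨M, ?_⟩
    rintro _ ⟨s, hs, rfl⟩
    obtain ⟨t, ⟨ht, hts⟩, hfM⟩ := (Filter.Eventually.and (Ioc_mem_nhdsGT hs.1) hbdd).exists
    exact (hf t s ht hts hs.2).trans hfM
  refine ⟨sSup A, tendsto_order.2 ⟨fun a ha => ?_, fun a ha => ?_⟩⟩
  · obtain ⟨_, ⟨s, hs, rfl⟩, has⟩ := exists_lt_of_lt_csSup hA ha
    filter_upwards [Ioc_mem_nhdsGT hs.1] with t ht
    exact has.trans_le (hf t s ht.1 ht.2 hs.2)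
  · filter_upwards [he.eventually_lt_const (sub_pos.2 ha), Ioc_mem_nhdsGT hδ] with t het ht
    have := le_csSup hAbdd ⟨t, ht, rfl⟩
    linarith

theorem hasFDerivAt_of_hasFDerivAt_sum {ι E : Type*} [Fintype ι] [NormedAddCommGroup E]
    [NormedSpace ℝ E] {v : ι → E → ℝ} {L : ι → E →L[ℝ] ℝ} {x₀ : E}
    (hsum : HasFDerivAt (fun x => ∑ i, v i x) (∑ i, L i) x₀)
    (hupper : ∀ i, ∀ ε > 0, ∀ᶠ h in 𝓝 0, v i (x₀ + h) - v i x₀ - L i h ≤ ε * ‖h‖) (j : ι) :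
    HasFDerivAt (v j) (L j) x₀ := by
  classical
  rw [hasFDerivAt_iff_isLittleO_nhds_zero, Asymptotics.isLittleO_iff]
  intro c hc
  set N : ℝ := (Fintype.card ι : ℝ)
  set ε := c / (N + 1)
  have hN : 0 < N + 1 := by positivity
  have hε : 0 < ε := div_pos hc hN
  have hcε : c = (N + 1) * ε := (mul_div_cancel₀ c hN.ne').symm
  filter_upwards [(hasFDerivAt_iff_isLittleO_nhds_zero.1 hsum).def hε,
    eventually_all.2 fun i => hupper i ε hε] with h hS hi
  set ρ := fun i => v i (x₀ + h) - v i x₀ - L i h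
  have hρsum : ∑ i, ρ i = ∑ i, v i (x₀ + h) - ∑ i, v i x₀ - (∑ i, L i) h := by
    simp only [ρ, Finset.sum_sub_distrib, sum_apply]
  have hrest : ∑ i ∈ Finset.univ.erase j, ρ i ≤ N * (ε * ‖h‖) :=
    calc ∑ i ∈ Finset.univ.erase j, ρ i ≤ ∑ i ∈ Finset.univ.erase j, ε * ‖h‖ :=
          Finset.sum_le_sum fun i _ => hi i
      _ ≤ ∑ _i : ι, ε * ‖h‖ :=
          Finset.sum_le_sum_of_subset_of_nonneg (Finset.erase_subset _ _) fun _ _ _ => by positivity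
      _ = N * (ε * ‖h‖) := by simp [N]
  have hsplit := Finset.add_sum_erase Finset.univ ρ (Finset.mem_univ j)
  rw [Real.norm_eq_abs] at hS ⊢
  have hN0 : 0 ≤ N * (ε * ‖h‖) := by positivity
  have hc_split : c * ‖h‖ = N * (ε * ‖h‖) + ε * ‖h‖ := by rw [hcε]; ring
  rw [abs_le, hc_split]
  constructor <;> linarith [abs_le.1 hS, hi j]

section Semiconcave

variable {n : ℕ} {u : En n → ℝ} {α C r : ℝ} {x₀ : En n}

theorem SemiconcaveOn.mono {A A' : Set (En n)} (hu : SemiconcaveOn A α C u) (hA : A' ⊆ A) :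
    SemiconcaveOn A' α C u :=
  fun x hx y hy hseg => hu x (hA hx) y (hA hy) (hseg.trans hA)

theorem SemiconcaveOn.mono_const {A : Set (En n)} {C' : ℝ} (hu : SemiconcaveOn A α C u)
    (hC : C ≤ C') : SemiconcaveOn A α C' u := by
  intro x hx y hy hseg t ht
  have : 0 ≤ t * (1 - t) * ‖x - y‖ ^ (1 + α) :=
    mul_nonneg (mul_nonneg ht.1 (sub_nonneg.2 ht.2)) (by positivity)
  calc _ ≤ C * t * (1 - t) * ‖x - y‖ ^ (1 + α) := hu x hx y hy hseg t ht
    _ = C * (t * (1 - t) * ‖x - y‖ ^ (1 + α)) := by ring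
    _ ≤ C' * (t * (1 - t) * ‖x - y‖ ^ (1 + α)) := mul_le_mul_of_nonneg_right hC this
    _ = C' * t * (1 - t) * ‖x - y‖ ^ (1 + α) := by ring

theorem SemiconcaveOn.apply_closedBall (hu : SemiconcaveOn (closedBall x₀ r) α C u) {x y : En n}
    (hx : x ∈ closedBall x₀ r) (hy : y ∈ closedBall x₀ r) {t : ℝ} (ht : t ∈ Set.Icc (0 : ℝ) 1) :
    t * u x + (1 - t) * u y - u (t • x + (1 - t) • y) ≤ C * t * (1 - t) * ‖x - y‖ ^ (1 + α) :=
  hu x hx y hy ((convex_closedBall x₀ r).segment_subset hx hy) t ht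

theorem SemiconcaveOn.dirDiffQuot_sub_le (hu : SemiconcaveOn (closedBall x₀ r) α C u) (hC : 0 ≤ C)
    (h : En n) {t s : ℝ} (ht : 0 < t) (hts : t ≤ s) (hsr : s * ‖h‖ ≤ r) :
    dirDiffQuot u x₀ h s - C * s ^ α * ‖h‖ ^ (1 + α) ≤ dirDiffQuot u x₀ h t := by
  have hs : 0 < s := ht.trans_le hts
  set τ := t / s
  have hτ : τ ∈ Set.Icc (0 : ℝ) 1 := ⟨by positivity, (div_le_one hs).2 hts⟩
  have htτ : t = τ * s := (div_mul_cancel₀ t hs.ne').symm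
  have key := hu.apply_closedBall (add_smul_mem_closedBall hs.le hsr)
    (mem_closedBall_self ((by positivity : 0 ≤ s * ‖h‖).trans hsr)) hτ
  have hmid : τ • (x₀ + s • h) + (1 - τ) • x₀ = x₀ + t • h := by rw [htτ]; module
  rw [hmid, add_sub_cancel_left, norm_smul, Real.norm_of_nonneg hs.le,
    Real.mul_rpow hs.le (norm_nonneg h), Real.rpow_add hs 1 α, Real.rpow_one] at key
  set P := s ^ α * ‖h‖ ^ (1 + α)
  have hP : 0 ≤ P := by positivity
  have herr : C * τ * (1 - τ) * (s * s ^ α * ‖h‖ ^ (1 + α)) ≤ C * t * P := by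
    rw [htτ]
    have : 0 ≤ C * τ * s * P := mul_nonneg (mul_nonneg (mul_nonneg hC hτ.1) hs.le) hP
    nlinarith [hτ.1]
  rw [dirDiffQuot, dirDiffQuot, le_div_iff₀ ht, sub_mul, div_mul_comm]
  have hP_eq : C * s ^ α * ‖h‖ ^ (1 + α) * t = C * t * P := by ring
  linarith

theorem SemiconcaveOn.dirDiffQuot_add_le (hu : SemiconcaveOn (closedBall x₀ r) α C u)
    (h₁ h₂ : En n) {t : ℝ} (ht : 0 < t) (h₁r : t * ‖h₁‖ ≤ r) (h₂r : t * ‖h₂‖ ≤ r) :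
    dirDiffQuot u x₀ h₁ t + dirDiffQuot u x₀ h₂ t - C / 2 * t ^ α * ‖h₁ - h₂‖ ^ (1 + α)
      ≤ dirDiffQuot u x₀ (h₁ + h₂) (2⁻¹ * t) := by
  have key := hu.apply_closedBall (add_smul_mem_closedBall ht.le h₁r)
    (add_smul_mem_closedBall ht.le h₂r) (t := 2⁻¹) ⟨by norm_num, by norm_num⟩
  have hmid : (2⁻¹ : ℝ) • (x₀ + t • h₁) + (1 - 2⁻¹ : ℝ) • (x₀ + t • h₂)
      = x₀ + (2⁻¹ * t) • (h₁ + h₂) := by module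
  have hdiff : x₀ + t • h₁ - (x₀ + t • h₂) = t • (h₁ - h₂) := by module
  rw [hmid, hdiff, norm_smul, Real.norm_of_nonneg ht.le, Real.mul_rpow ht.le (norm_nonneg _),
    Real.rpow_add ht 1 α, Real.rpow_one] at key
  rw [dirDiffQuot, dirDiffQuot, dirDiffQuot, le_div_iff₀ (by positivity)]
  have hexpand : ((u (x₀ + t • h₁) - u x₀) / t + (u (x₀ + t • h₂) - u x₀) / t
      - C / 2 * t ^ α * ‖h₁ - h₂‖ ^ (1 + α)) * (2⁻¹ * t)
      = 2⁻¹ * u (x₀ + t • h₁) + (1 - 2⁻¹) * u (x₀ + t • h₂) - u x₀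
        - C * 2⁻¹ * (1 - 2⁻¹) * (t * t ^ α * ‖h₁ - h₂‖ ^ (1 + α)) := by
    field_simp
    ring
  linarith

theorem SemiconcaveOn.exists_tendsto_dirDiffQuot (hu : SemiconcaveOn (closedBall x₀ r) α C u)
    (hC : 0 ≤ C) (hα : 0 < α) (hr : 0 < r) {K : NNReal} {s : Set (En n)}
    (hlip : LipschitzOnWith K u s) (hs : s ∈ 𝓝 x₀) (h : En n) :
    ∃ l, Tendsto (dirDiffQuot u x₀ h) (𝓝[>] 0) (𝓝 l) := by
  refine exists_tendsto_nhdsGT_zero_of_sub_le (tendsto_mul_rpow_mul_nhdsGT_zero hα C _)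
    (hlip.eventually_dirDiffQuot_le hs h) (δ := r / (‖h‖ + 1)) (by positivity)
    fun t s ht hts hsδ => hu.dirDiffQuot_sub_le hC h ht hts ?_
  rw [le_div_iff₀ (by positivity)] at hsδ
  nlinarith [ht.trans_le hts]

theorem SemiconcaveOn.sub_sub_le_of_tendsto (hu : SemiconcaveOn (closedBall x₀ r) α C u)
    (hC : 0 ≤ C) {h : En n} (hh : ‖h‖ ≤ r) {l : ℝ}
    (hl : Tendsto (dirDiffQuot u x₀ h) (𝓝[>] 0) (𝓝 l)) :
    u (x₀ + h) - u x₀ - l ≤ C * ‖h‖ ^ (1 + α) := by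
  have hev : ∀ᶠ t in 𝓝[>] 0, u (x₀ + h) - u x₀ - C * ‖h‖ ^ (1 + α) ≤ dirDiffQuot u x₀ h t := by
    filter_upwards [Ioc_mem_nhdsGT one_pos] with t ht
    simpa [dirDiffQuot] using hu.dirDiffQuot_sub_le hC h ht.1 ht.2 (by simpa using hh)
  linarith [ge_of_tendsto hl hev]

theorem SemiconcaveOn.add_le_of_tendsto (hu : SemiconcaveOn (closedBall x₀ r) α C u)
    (hα : 0 < α) (hr : 0 < r) {h₁ h₂ : En n} {l₁ l₂ l : ℝ}
    (hl₁ : Tendsto (dirDiffQuot u x₀ h₁) (𝓝[>] 0) (𝓝 l₁))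
    (hl₂ : Tendsto (dirDiffQuot u x₀ h₂) (𝓝[>] 0) (𝓝 l₂))
    (hl : Tendsto (dirDiffQuot u x₀ (h₁ + h₂)) (𝓝[>] 0) (𝓝 l)) : l₁ + l₂ ≤ l := by
  have hlhs := (hl₁.add hl₂).sub
    (tendsto_mul_rpow_mul_nhdsGT_zero hα (C / 2) (‖h₁ - h₂‖ ^ (1 + α)))
  rw [sub_zero] at hlhs
  have hrhs := hl.comp (tendsto_const_mul_nhdsGT_zero (by norm_num : (0 : ℝ) < 2⁻¹))
  refine le_of_tendsto_of_tendsto hlhs hrhs ?_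
  have hD : 0 < ‖h₁‖ + ‖h₂‖ + 1 := by positivity
  filter_upwards [Ioc_mem_nhdsGT (div_pos hr hD)] with t ⟨ht, htD⟩
  rw [le_div_iff₀ hD] at htD
  exact hu.dirDiffQuot_add_le h₁ h₂ ht (by nlinarith [norm_nonneg h₂])
    (by nlinarith [norm_nonneg h₁])

theorem SemiconcaveOn.eventually_sub_sub_le (hu : SemiconcaveOn (closedBall x₀ r) α C u)
    (hC : 0 ≤ C) (hα : 0 < α) (hr : 0 < r) {d : En n → ℝ}
    (hd : ∀ h, Tendsto (dirDiffQuot u x₀ h) (𝓝[>] 0) (𝓝 (d h))) {ε : ℝ} (hε : 0 < ε) :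
    ∀ᶠ h in 𝓝 0, u (x₀ + h) - u x₀ - d h ≤ ε * ‖h‖ := by
  filter_upwards [((Asymptotics.isLittleO_norm_rpow_one_add hα).const_mul_left C).def hε,
    closedBall_mem_nhds 0 hr] with h hsmall hh
  rw [Real.norm_of_nonneg (mul_nonneg hC (by positivity)), norm_norm] at hsmall
  exact (hu.sub_sub_le_of_tendsto hC (by simpa using hh) (hd h)).trans hsmall

end Semiconcave

theorem stmt10 {n : ℕ} {B : Set (En n)} (hB : IsOpen B) {α : ℝ} (hα : α ∈ Set.Ioc (0:ℝ) 1)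
    {ℓ : ℕ} (v : Fin ℓ → En n → ℝ)
    (hv : ∀ j, LocallyLipschitzOn B (v j) ∧ ∃ C, SemiconcaveOn B α C (v j))
    (x₀ : En n) (hx₀ : x₀ ∈ B)
    (hsum : DifferentiableAt ℝ (fun x => ∑ j, v j x) x₀) :
    ∀ j, DifferentiableAt ℝ (v j) x₀ := by
  obtain ⟨r, hr, hrB⟩ := nhds_basis_closedBall.mem_iff.1 (hB.mem_nhds hx₀)
  have hsc : ∀ j, ∃ C, 0 ≤ C ∧ SemiconcaveOn (closedBall x₀ r) α C (v j) := fun j =>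
    let ⟨C, hC⟩ := (hv j).2
    ⟨max C 0, le_max_right _ _, (hC.mono hrB).mono_const (le_max_left _ _)⟩
  choose C hC0 hsc using hsc
  have hdir : ∀ j h, ∃ l, Tendsto (dirDiffQuot (v j) x₀ h) (𝓝[>] 0) (𝓝 l) := fun j h => by
    obtain ⟨K, s, hs, hK⟩ := (hv j).1 hx₀
    rw [hB.nhdsWithin_eq hx₀] at hs
    exact (hsc j).exists_tendsto_dirDiffQuot (hC0 j) hα.1 hr hK hs h
  choose d hd using hdir
  have hsum_d : ∀ h, ∑ j, d j h = fderiv ℝ (fun x => ∑ j, v j x) x₀ h := fun h =>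
    tendsto_nhds_unique
      (by simpa only [← dirDiffQuot_sum] using tendsto_finsetSum _ fun j _ => hd j h)
      (hsum.hasFDerivAt.tendsto_dirDiffQuot h)
  have hlin : ∀ j, IsLinearMap ℝ (d j) := fun j =>
    isLinearMap_of_tendsto_dirDiffQuot (hd j) <| map_add_of_sum_superadditive d
      (fun j a b => (hsc j).add_le_of_tendsto hα.1 hr (hd j a) (hd j b) (hd j (a + b)))
      (fun a b => by simp only [hsum_d, map_add]) j
  let L j : En n →L[ℝ] ℝ := LinearMap.toContinuousLinearMap (IsLinearMap.mk' _ (hlin j))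
  have hL : ∑ i, L i = fderiv ℝ (fun x => ∑ j, v j x) x₀ := by
    ext h
    simp [L, ← hsum_d]
  exact fun j => (hasFDerivAt_of_hasFDerivAt_sum (hL ▸ hsum.hasFDerivAt)
    (fun i _ => (hsc i).eventually_sub_sub_le (hC0 i) hα.1 hr (hd i)) j).differentiableAt
end

section
/- Let u(x) = −|x| on the closure of Ω = {x ∈ ℝ² : x₁ > 0, |x| < 1}, and define for x ∈ B_1(0) the function E(x) = −|x| if x₁ ≥ 0 and E(x) = −|x₂| + x₁² if x₁ < 0. Then E is the infimum extension inf over y ∈ closure(Ω), p ∈ D*u(y) of [u(y) + ⟨p, x−y⟩ + |x−y|²]; in particular E ∈ SC¹(B_1(0)), E = u on closure(Ω) ∩ B_1(0), and E is not concave on B_1(0). -/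
open scoped RealInnerProductSpace
open Metric Filter

/-! The reachable gradients of `u = -‖·‖` at `y ≠ 0` reduce to `-y/‖y‖`, and at `0` they are unit
vectors `p` with `p₀ ≤ 0`; in every case `u y = ⟪p, y⟫`, so each competitor equals
`⟪p, x⟫ + ‖x - y‖²`. For `x₀ ≥ 0` Cauchy–Schwarz bounds it below by `-‖x‖`, and for `x₀ < 0` the
signs of `p₀ x₀` and `(x₀ - y₀)² ≥ x₀²` bound it below by `-|x₁| + x₀²`. Both bounds are attained
(at `y = x`, at `y = (0, x₁)`, or at `y = 0` with `p = -(0, 1)`), so the infimum is a minimum of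
quadratics `c + ⟪p, x⟫ + ‖x - y‖²`, which makes it semiconcave with constant `1`; along the
negative `x₀`-axis it equals the convex function `x₀²`. -/

open scoped Topology

section NegNorm

variable {F : Type*} [NormedAddCommGroup F] [InnerProductSpace ℝ F]

theorem hasGradientAt_neg_norm [CompleteSpace F] {z : F} (hz : z ≠ 0) :
    HasGradientAt (fun x => -‖x‖) (-(‖z‖⁻¹ • z)) z := by
  have h := ((hasStrictFDerivAt_norm_sq z).hasFDerivAt.sqrt (by positivity)).neg
  simp only [Real.sqrt_sq (norm_nonneg _)] at h
  rw [hasGradientAt_iff_hasFDerivAt]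
  refine h.congr_fderiv ?_
  ext w
  simp only [one_div, mul_inv_rev, neg_apply, smul_apply, coe_innerSL_apply, nsmul_eq_mul,
    Nat.cast_ofNat, smul_eq_mul, map_neg, map_smul, InnerProductSpace.toDual_apply_apply, neg_inj]
  field_simp

theorem continuousAt_normalize {z : F} (hz : z ≠ 0) :
    ContinuousAt (fun x : F => ‖x‖⁻¹ • x) z := by
  fun_prop (disch := simpa using hz)

lemma normalize_smul_of_pos {t : ℝ} (ht : 0 < t) (w : F) : ‖t • w‖⁻¹ • (t • w) = ‖w‖⁻¹ • w := by
  rw [norm_smul, Real.norm_of_nonneg ht.le, smul_smul, mul_inv, mul_right_comm,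
    inv_mul_cancel₀ ht.ne', one_mul]

lemma convex_comb_affine_add_norm_sub_sq (c : ℝ) (p y a b : F) (t : ℝ) :
    t * (c + ⟪p, a - y⟫ + ‖a - y‖ ^ 2) + (1 - t) * (c + ⟪p, b - y⟫ + ‖b - y‖ ^ 2)
      - (c + ⟪p, t • a + (1 - t) • b - y⟫ + ‖t • a + (1 - t) • b - y‖ ^ 2)
      = t * (1 - t) * ‖a - b‖ ^ 2 := by
  have h1 : t • a + (1 - t) • b - y = t • (a - y) + (1 - t) • (b - y) := by module
  have h2 : a - b = (a - y) - (b - y) := by abel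
  rw [h1, h2]
  simp only [← real_inner_self_eq_norm_sq, inner_add_left, inner_add_right, inner_sub_left,
    inner_sub_right, real_inner_smul_left, real_inner_smul_right, real_inner_comm (a - y)]
  ring

end NegNorm

section ReachableGradients

variable {n : ℕ} {Ω : Set (En n)} {u : En n → ℝ} {x p : En n}

lemma mem_reachGrad_of_tendsto {ι : Type*} {l : Filter ι} [l.IsCountablyGenerated] [l.NeBot]
    {γ : ι → En n}
    (hγΩ : ∀ᶠ i in l, γ i ∈ Ω ∧ DifferentiableAt ℝ u (γ i))
    (hγ : Tendsto γ l (𝓝 x)) (hgrad : Tendsto (fun i => gradient u (γ i)) l (𝓝 p)) :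
    p ∈ reachGrad Ω u x := by
  obtain ⟨s, hs⟩ := l.exists_seq_tendsto
  obtain ⟨φ, hφ, hγφ⟩ := extraction_of_eventually_atTop (hs.eventually hγΩ)
  have hsφ := hs.comp hφ.tendsto_atTop
  exact ⟨γ ∘ s ∘ φ, hγφ, hγ.comp hsφ, hgrad.comp hsφ⟩

lemma mem_closure_of_mem_reachGrad (hp : p ∈ reachGrad Ω u x) : x ∈ closure Ω := by
  obtain ⟨xs, hxs, hx, -⟩ := hp
  exact mem_closure_of_tendsto hx (Eventually.of_forall fun k => (hxs k).1)

lemma mem_closure_graph_of_mem_reachGrad (hp : p ∈ reachGrad Ω u x) :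
    (x, p) ∈ closure {q : En n × En n | q.1 ∈ Ω ∧ q.2 = gradient u q.1} := by
  obtain ⟨xs, hxs, hx, hg⟩ := hp
  exact mem_closure_of_tendsto (hx.prodMk_nhds hg) (Eventually.of_forall fun k => ⟨(hxs k).1, rfl⟩)

lemma neg_normalize_mem_reachGrad {ι : Type*} {l : Filter ι} [l.IsCountablyGenerated] [l.NeBot]
    (hΩ : (0 : En n) ∉ Ω) {γ : ι → En n} {q : En n}
    (hγΩ : ∀ᶠ i in l, γ i ∈ Ω) (hγ : Tendsto γ l (𝓝 x))
    (hdir : Tendsto (fun i => ‖γ i‖⁻¹ • γ i) l (𝓝 q)) :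
    -q ∈ reachGrad Ω (fun x => -‖x‖) x := by
  have hgrad : ∀ z ∈ Ω, HasGradientAt (fun x : En n => -‖x‖) (-(‖z‖⁻¹ • z)) z :=
    fun z hz => hasGradientAt_neg_norm (ne_of_mem_of_not_mem hz hΩ)
  refine mem_reachGrad_of_tendsto (hγΩ.mono fun i hi => ⟨hi, (hgrad _ hi).differentiableAt⟩)
    hγ (hdir.neg.congr' ?_)
  filter_upwards [hγΩ] with i hi using ((hgrad _ hi).gradient).symm

def infExtensionSet (Ω : Set (En n)) (u : En n → ℝ) (x : En n) : Set ℝ :=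
  {v | ∃ y ∈ closure Ω, ∃ p ∈ reachGrad Ω u y, v = u y + ⟪p, x - y⟫ + ‖x - y‖ ^ 2}

lemma semiconcaveOn_of_isLeast_infExtensionSet {A : Set (En n)} {E : En n → ℝ}
    (hE : ∀ x ∈ A, IsLeast (infExtensionSet Ω u x) (E x)) : SemiconcaveOn A 1 1 E := by
  intro a ha b hb hseg t ⟨ht0, ht1⟩
  have hz : t • a + (1 - t) • b ∈ A := hseg ⟨t, 1 - t, ht0, by linarith, by ring, rfl⟩
  obtain ⟨⟨y, hy, p, hp, hEz⟩, -⟩ := hE _ hz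
  have hEa := mul_le_mul_of_nonneg_left ((hE a ha).2 ⟨y, hy, p, hp, rfl⟩) ht0
  have hEb := mul_le_mul_of_nonneg_left ((hE b hb).2 ⟨y, hy, p, hp, rfl⟩) (sub_nonneg.mpr ht1)
  have hquad := convex_comb_affine_add_norm_sub_sq (u y) p y a b t
  rw [show (1 : ℝ) + 1 = (2 : ℕ) by norm_num, Real.rpow_natCast]
  linarith

end ReachableGradients

lemma abs_apply_le_norm {n : ℕ} (a : En n) (i : Fin n) : |a i| ≤ ‖a‖ :=
  (Real.norm_eq_abs (a i)).symm ▸ PiLp.norm_apply_le a i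

lemma inner_fin_two (a b : En 2) : ⟪a, b⟫ = a 0 * b 0 + a 1 * b 1 := by
  simp [PiLp.inner_apply, Fin.sum_univ_two, mul_comm]

lemma norm_sq_fin_two (a : En 2) : ‖a‖ ^ 2 = a 0 ^ 2 + a 1 ^ 2 := by
  simp [EuclideanSpace.real_norm_sq_eq, Fin.sum_univ_two]

def halfDisk : Set (En 2) := {x | 0 < x 0 ∧ ‖x‖ < 1}

lemma zero_notMem_halfDisk : (0 : En 2) ∉ halfDisk := fun h => (lt_irrefl 0) h.1

lemma nonneg_of_mem_closure_halfDisk {y : En 2} (hy : y ∈ closure halfDisk) : 0 ≤ y 0 :=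
  closure_minimal (t := {z : En 2 | 0 ≤ z 0}) (fun z hz => hz.1.le)
    (isClosed_le continuous_const (by fun_prop)) hy

lemma reachGrad_halfDisk_spec {y p : En 2} (hp : p ∈ reachGrad halfDisk (fun x => -‖x‖) y) :
    ‖p‖ = 1 ∧ p 0 ≤ 0 ∧ ⟪p, y⟫ = -‖y‖ := by
  set C := {q : En 2 × En 2 | ‖q.2‖ = 1 ∧ q.2 0 ≤ 0 ∧ ⟪q.2, q.1⟫ = -‖q.1‖}
  have hclosed : IsClosed C :=
    (isClosed_eq (by fun_prop) (by fun_prop)).and <|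
      (isClosed_le (by fun_prop) (by fun_prop)).and (isClosed_eq (by fun_prop) (by fun_prop))
  have hgraph : {q : En 2 × En 2 | q.1 ∈ halfDisk ∧ q.2 = gradient (fun x => -‖x‖) q.1} ⊆ C := by
    rintro ⟨z, q⟩ ⟨hz, hq : q = gradient _ z⟩
    subst hq
    have hz0 : z ≠ 0 := ne_of_mem_of_not_mem hz zero_notMem_halfDisk
    have hnz : ‖z‖ ≠ 0 := norm_ne_zero_iff.mpr hz0
    simp only [C, Set.mem_ofPred_eq, (hasGradientAt_neg_norm hz0).gradient]
    refine ⟨?_, ?_, ?_⟩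
    · rw [norm_neg, norm_smul, norm_inv, norm_norm, inv_mul_cancel₀ hnz]
    · simp only [PiLp.neg_apply, PiLp.smul_apply, smul_eq_mul, neg_nonpos]
      exact mul_nonneg (inv_nonneg.mpr (norm_nonneg z)) hz.1.le
    · rw [inner_neg_left, real_inner_smul_left, real_inner_self_eq_norm_sq]
      field_simp
  exact (closure_minimal hgraph hclosed (mem_closure_graph_of_mem_reachGrad hp) : (y, p) ∈ C)

lemma neg_normalize_mem_reachGrad_halfDisk {y : En 2} (hy0 : 0 ≤ y 0) (hy : y ≠ 0)
    (hy1 : ‖y‖ < 1) : -(‖y‖⁻¹ • y) ∈ reachGrad halfDisk (fun x => -‖x‖) y := by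
  let γ : ℝ → En 2 := fun t => y + t • EuclideanSpace.single 0 1
  have hγ : Tendsto γ (𝓝[>] 0) (𝓝 y) := by
    have hcont : Continuous γ := by fun_prop
    simpa [γ] using hcont.continuousAt.tendsto.mono_left (nhdsWithin_le_nhds (a := 0))
  refine neg_normalize_mem_reachGrad zero_notMem_halfDisk ?_ hγ
    ((continuousAt_normalize hy).tendsto.comp hγ)
  filter_upwards [self_mem_nhdsWithin,
    hγ.eventually (isOpen_ball.mem_nhds (mem_ball_zero_iff.mpr hy1))] with t (ht : 0 < t) hball
  refine ⟨?_, mem_ball_zero_iff.mp hball⟩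
  simp only [PiLp.add_apply, PiLp.smul_apply, PiLp.single_eq_same, smul_eq_mul, mul_one, γ]
  linarith

lemma neg_single_mem_reachGrad_halfDisk_zero :
    -EuclideanSpace.single 1 1 ∈ reachGrad halfDisk (fun x => -‖x‖) 0 := by
  let w : ℝ → En 2 := fun t => t • EuclideanSpace.single 0 1 + EuclideanSpace.single 1 1
  have hw : Tendsto w (𝓝[>] 0) (𝓝 (EuclideanSpace.single 1 1)) := by
    have hcont : Continuous w := by fun_prop
    simpa [w] using hcont.continuousAt.tendsto.mono_left (nhdsWithin_le_nhds (a := 0))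
  have hγ : Tendsto (fun t => t • w t) (𝓝[>] 0) (𝓝 0) := by
    simpa using (tendsto_nhdsWithin_of_tendsto_nhds tendsto_id).smul hw
  have hdir : Tendsto (fun t => ‖w t‖⁻¹ • w t) (𝓝[>] 0) (𝓝 (EuclideanSpace.single 1 1)) := by
    simpa [Function.comp_def] using (continuousAt_normalize (by simp)).tendsto.comp hw
  refine neg_normalize_mem_reachGrad zero_notMem_halfDisk ?_ hγ (hdir.congr' ?_)
  · filter_upwards [self_mem_nhdsWithin, hγ.eventually (ball_mem_nhds 0 one_pos)]
      with t (ht : 0 < t) hball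
    refine ⟨?_, mem_ball_zero_iff.mp hball⟩
    simpa [w] using mul_pos ht ht
  · filter_upwards [self_mem_nhdsWithin] with t (ht : 0 < t)
    exact (normalize_smul_of_pos ht (w t)).symm

lemma reachGrad_halfDisk_value {y p : En 2} (hp : p ∈ reachGrad halfDisk (fun x => -‖x‖) y)
    (x : En 2) : -‖y‖ + ⟪p, x - y⟫ + ‖x - y‖ ^ 2 = ⟪p, x⟫ + ‖x - y‖ ^ 2 := by
  rw [inner_sub_right, (reachGrad_halfDisk_spec hp).2.2]
  ring

noncomputable def cornerExtension (x : En 2) : ℝ :=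
  if 0 ≤ x 0 then -‖x‖ else -|x 1| + x 0 ^ 2

lemma cornerExtension_le {p y : En 2} (hp : ‖p‖ ≤ 1) (hp0 : p 0 ≤ 0) (hy0 : 0 ≤ y 0) (x : En 2) :
    cornerExtension x ≤ ⟪p, x⟫ + ‖x - y‖ ^ 2 := by
  unfold cornerExtension
  split_ifs with hx0
  · have hCS : -‖x‖ ≤ ⟪p, x⟫ := neg_le_of_abs_le ((abs_real_inner_le_norm p x).trans
      (mul_le_of_le_one_left (norm_nonneg x) hp))
    nlinarith [sq_nonneg ‖x - y‖]
  · have hp1 : -|x 1| ≤ p 1 * x 1 := by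
      refine neg_le_of_abs_le ?_
      rw [abs_mul]
      exact mul_le_of_le_one_left (abs_nonneg _) ((abs_apply_le_norm p 1).trans hp)
    rw [inner_fin_two, norm_sq_fin_two]
    simp only [PiLp.sub_apply]
    nlinarith [sq_nonneg (x 1 - y 1)]

lemma cornerExtension_mem_infExtensionSet {x : En 2} (hx : ‖x‖ < 1) :
    cornerExtension x ∈ infExtensionSet halfDisk (fun x => -‖x‖) x := by
  have hmem : ∀ {y p}, p ∈ reachGrad halfDisk (fun x => -‖x‖) y →
      ⟪p, x⟫ + ‖x - y‖ ^ 2 = cornerExtension x →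
      cornerExtension x ∈ infExtensionSet halfDisk (fun x => -‖x‖) x := fun hp h =>
    ⟨_, mem_closure_of_mem_reachGrad hp, _, hp, by rw [reachGrad_halfDisk_value hp, h]⟩
  by_cases hx0 : 0 ≤ x 0
  · by_cases hxz : x = 0
    · subst hxz
      exact hmem neg_single_mem_reachGrad_halfDisk_zero (by simp [cornerExtension])
    · refine hmem (neg_normalize_mem_reachGrad_halfDisk hx0 hxz hx) ?_
      rw [sub_self, norm_zero, inner_neg_left, real_inner_smul_left, real_inner_self_eq_norm_sq,
        cornerExtension, if_pos hx0]
      field_simp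
      ring
  · by_cases hx1 : x 1 = 0
    · refine hmem neg_single_mem_reachGrad_halfDisk_zero ?_
      simp [cornerExtension, hx0, hx1, inner_fin_two, norm_sq_fin_two]
    · set y : En 2 := EuclideanSpace.single 1 (x 1)
      have hy : ‖y‖ = |x 1| := by simp [y]
      refine hmem (neg_normalize_mem_reachGrad_halfDisk (by simp [y]) (by simpa [y] using hx1)
        (hy ▸ (abs_apply_le_norm x 1).trans_lt hx)) ?_
      rw [hy, cornerExtension, if_neg hx0, inner_fin_two, norm_sq_fin_two]
      have habs : |x 1|⁻¹ * x 1 * x 1 = |x 1| := by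
        rw [mul_assoc, ← abs_mul_abs_self, ← mul_assoc, inv_mul_cancel₀ (abs_ne_zero.mpr hx1),
          one_mul]
      simp [y, habs]

lemma isLeast_infExtensionSet_halfDisk {x : En 2} (hx : ‖x‖ < 1) :
    IsLeast (infExtensionSet halfDisk (fun x => -‖x‖) x) (cornerExtension x) := by
  refine ⟨cornerExtension_mem_infExtensionSet hx, ?_⟩
  rintro v ⟨y, hy, p, hp, rfl⟩
  obtain ⟨hp1, hp0, -⟩ := reachGrad_halfDisk_spec hp
  rw [reachGrad_halfDisk_value hp]
  exact cornerExtension_le hp1.le hp0 (nonneg_of_mem_closure_halfDisk hy) x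

lemma cornerExtension_single_zero_of_nonpos {s : ℝ} (hs : s ≤ 0) :
    cornerExtension (EuclideanSpace.single 0 s) = s ^ 2 := by
  rcases hs.lt_or_eq with hs | rfl
  · simp [cornerExtension, hs.not_ge]
  · simp [cornerExtension]

lemma not_concaveOn_cornerExtension : ¬ ConcaveOn ℝ (ball (0 : En 2) 1) cornerExtension := by
  intro hconc
  have hmem : ∀ s : ℝ, |s| < 1 → EuclideanSpace.single 0 s ∈ ball (0 : En 2) 1 := by
    intro s hs; simpa using hs
  have hmid := hconc.2 (hmem (-1 / 2) (by norm_num [abs_of_neg])) (hmem 0 (by norm_num))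
    (by norm_num : (0 : ℝ) ≤ 1 / 2) (by norm_num : (0 : ℝ) ≤ 1 / 2) (by norm_num)
  have hcomb : (1 / 2 : ℝ) • EuclideanSpace.single 0 (-1 / 2) + (1 / 2 : ℝ) • EuclideanSpace.single 0 0
      = (EuclideanSpace.single 0 (-1 / 4) : En 2) := by
    ext i; fin_cases i <;> norm_num
  rw [hcomb] at hmid
  simp only [cornerExtension_single_zero_of_nonpos (by norm_num : (-1 / 2 : ℝ) ≤ 0),
    cornerExtension_single_zero_of_nonpos le_rfl,
    cornerExtension_single_zero_of_nonpos (by norm_num : (-1 / 4 : ℝ) ≤ 0)] at hmid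
  norm_num at hmid

theorem stmt15 (Ω : Set (En 2)) (hΩ : Ω = {x : En 2 | 0 < x 0 ∧ ‖x‖ < 1})
    (u : En 2 → ℝ) (hu : u = fun x => -‖x‖)
    (E : En 2 → ℝ)
    (hE : E = fun x => if 0 ≤ x 0 then -‖x‖ else -|x 1| + (x 0) ^ 2) :
    (∀ x ∈ ball (0 : En 2) 1, E x =
      sInf {v | ∃ y ∈ closure Ω, ∃ p ∈ reachGrad Ω u y,
        v = u y + ⟪p, x - y⟫ + ‖x - y‖ ^ 2}) ∧
    (∃ C, SemiconcaveOn (ball (0 : En 2) 1) 1 C E) ∧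
    (∀ x ∈ closure Ω ∩ ball (0 : En 2) 1, E x = u x) ∧
    ¬ ConcaveOn ℝ (ball (0 : En 2) 1) E := by
  obtain rfl : Ω = halfDisk := hΩ
  obtain rfl : E = cornerExtension := hE
  subst hu
  have hleast : ∀ x ∈ ball (0 : En 2) 1,
      IsLeast (infExtensionSet halfDisk (fun x => -‖x‖) x) (cornerExtension x) :=
    fun x hx => isLeast_infExtensionSet_halfDisk (mem_ball_zero_iff.mp hx)
  refine ⟨fun x hx => (hleast x hx).csInf_eq.symm,
    ⟨1, semiconcaveOn_of_isLeast_infExtensionSet hleast⟩,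
    fun x ⟨hx, _⟩ => if_pos (nonneg_of_mem_closure_halfDisk hx), not_concaveOn_cornerExtension⟩
end

section
/- Let Ω ⊂ ℝ² be an open set contained in {x₁ > 0} and containing {x : x₁ > 0, |x| < 1}, and let u(x) = −√(x₁⁴ + x₂²) on closure(Ω). Then D*u(0) = {0} × [−1,1]; in particular co D*u(0) \ D*u(0) = ∅. -/
/-! Away from the origin the gradient of `u` is `-(2x₁³, x₂)/√(x₁⁴ + x₂²)`: its first component
is at most `2|x₁|` in absolute value and its second lies in `[-1, 1]`, so every gradient reachable
at `0` from `Ω` lies in the convex set `{0} × [-1, 1]`. Conversely, along the curve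
`s ↦ (s, -σ s² / √(1 - σ² + s))`, which enters the half-disc as `s → 0⁺`, the second component
is `σ / √(1 + s)`, so every `(0, σ)` with `|σ| ≤ 1` is reached. -/

open scoped RealInnerProductSpace
open Metric Filter

open Topology Set

lemma tendsto_euclideanSpace_iff {ι α : Type*} [Fintype ι] {l : Filter α}
    {v : α → EuclideanSpace ℝ ι} {p : EuclideanSpace ℝ ι} :
    Tendsto v l (𝓝 p) ↔ ∀ i, Tendsto (fun k => v k i) l (𝓝 (p i)) := by
  rw [nhds_induced, tendsto_comap_iff, tendsto_pi_nhds]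
  rfl

lemma mem_reachGrad_of_tendsto_s16 {n : ℕ} {Ω : Set (En n)} {u : En n → ℝ} {x p : En n}
    {xs : ℕ → En n} (hxs : ∀ᶠ k in atTop, xs k ∈ Ω ∧ DifferentiableAt ℝ u (xs k))
    (hx : Tendsto xs atTop (𝓝 x)) (hp : Tendsto (fun k => gradient u (xs k)) atTop (𝓝 p)) :
    p ∈ reachGrad Ω u x := by
  obtain ⟨N, hN⟩ := eventually_atTop.1 hxs
  exact ⟨fun k => xs (k + N), fun k => hN _ (Nat.le_add_left N k),
    hx.comp (tendsto_add_atTop_nat N), hp.comp (tendsto_add_atTop_nat N)⟩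

lemma sq_le_sqrt_pow_four_add_sq (a b : ℝ) : a ^ 2 ≤ √(a ^ 4 + b ^ 2) :=
  Real.le_sqrt_of_sq_le (by nlinarith [sq_nonneg b])

lemma abs_two_mul_pow_three_div_sqrt_le (a b : ℝ) : |2 * a ^ 3 / √(a ^ 4 + b ^ 2)| ≤ 2 * |a| := by
  rcases eq_or_ne a 0 with rfl | ha
  · simp
  have ha2 : 0 < a ^ 2 := by positivity
  rw [abs_div, abs_of_nonneg (Real.sqrt_nonneg _),
    div_le_iff₀ (ha2.trans_le (sq_le_sqrt_pow_four_add_sq a b))]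
  calc |2 * a ^ 3| = 2 * |a| * a ^ 2 := by rw [abs_mul, abs_pow, abs_two, ← sq_abs a]; ring
    _ ≤ 2 * |a| * √(a ^ 4 + b ^ 2) := by gcongr; exact sq_le_sqrt_pow_four_add_sq a b

lemma abs_div_sqrt_add_sq_le_one {a : ℝ} (ha : 0 ≤ a) (b : ℝ) : |b / √(a + b ^ 2)| ≤ 1 := by
  rw [abs_div, abs_of_nonneg (Real.sqrt_nonneg _)]
  exact div_le_one_of_le₀ (Real.abs_le_sqrt (by linarith)) (Real.sqrt_nonneg _)

noncomputable def negSqrtQuartic (x : En 2) : ℝ := -√(x 0 ^ 4 + x 1 ^ 2)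

lemma hasGradientAt_negSqrtQuartic {x : En 2} (hx : x 0 ^ 4 + x 1 ^ 2 ≠ 0) :
    HasGradientAt negSqrtQuartic
      !₂[-(2 * x 0 ^ 3 / √(x 0 ^ 4 + x 1 ^ 2)), -(x 1 / √(x 0 ^ 4 + x 1 ^ 2))] x := by
  have hpow (i : Fin 2) (m : ℕ) : HasFDerivAt (fun y : En 2 => y i ^ m)
      (((m * x i ^ (m - 1) : ℝ)) • EuclideanSpace.proj i : En 2 →L[ℝ] ℝ) x := by
    simpa [Function.comp_def] using (hasDerivAt_pow m (x i)).comp_hasFDerivAt x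
      (EuclideanSpace.proj i : En 2 →L[ℝ] ℝ).hasFDerivAt
  rw [hasGradientAt_iff_hasFDerivAt]
  refine ((Real.hasDerivAt_sqrt hx).comp_hasFDerivAt x
    ((hpow 0 4).add (hpow 1 2))).neg.congr_fderiv ?_
  have hs : √(x 0 ^ 4 + x 1 ^ 2) ≠ 0 := by positivity
  ext v
  simp only [Fin.isValue, one_div, mul_inv_rev, Nat.cast_ofNat, Nat.add_one_sub_one, pow_one,
    smul_add, neg_add_rev, add_apply, neg_apply,
    smul_apply, PiLp.proj_apply, smul_eq_mul,
    InnerProductSpace.toDual_apply_apply, PiLp.inner_apply, RCLike.inner_apply, Real.ringHom_apply,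
    Fin.sum_univ_two, Matrix.cons_val_zero, mul_neg, Matrix.cons_val_one, Matrix.cons_val_fin_one]
  field_simp
  ring

lemma gradient_negSqrtQuartic {x : En 2} (hx : x 0 ≠ 0) :
    gradient negSqrtQuartic x =
      !₂[-(2 * x 0 ^ 3 / √(x 0 ^ 4 + x 1 ^ 2)), -(x 1 / √(x 0 ^ 4 + x 1 ^ 2))] :=
  (hasGradientAt_negSqrtQuartic (by positivity)).gradient

lemma abs_gradient_negSqrtQuartic_zero_le {x : En 2} (hx : x 0 ≠ 0) :
    |gradient negSqrtQuartic x 0| ≤ 2 * |x 0| := by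
  rw [gradient_negSqrtQuartic hx]
  simpa using abs_two_mul_pow_three_div_sqrt_le (x 0) (x 1)

lemma gradient_negSqrtQuartic_one_mem_Icc {x : En 2} (hx : x 0 ≠ 0) :
    gradient negSqrtQuartic x 1 ∈ Icc (-1) 1 := by
  rw [gradient_negSqrtQuartic hx, mem_Icc, ← abs_le]
  simpa using abs_div_sqrt_add_sq_le_one (by positivity : 0 ≤ x 0 ^ 4) (x 1)

lemma reachGrad_negSqrtQuartic_subset {Ω : Set (En 2)} (hΩ : Ω ⊆ {x | x 0 ≠ 0}) :
    reachGrad Ω negSqrtQuartic 0 ⊆ {p | p 0 = 0 ∧ p 1 ∈ Icc (-1) 1} := by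
  rintro p ⟨xs, hxs, hlim, hgrad⟩
  rw [tendsto_euclideanSpace_iff] at hlim hgrad
  have hne (k : ℕ) : xs k 0 ≠ 0 := hΩ (hxs k).1
  refine ⟨tendsto_nhds_unique (hgrad 0) (squeeze_zero_norm
    (fun k => abs_gradient_negSqrtQuartic_zero_le (hne k)) ?_), isClosed_Icc.mem_of_tendsto
    (hgrad 1) (Eventually.of_forall fun k => gradient_negSqrtQuartic_one_mem_Icc (hne k))⟩
  simpa using (hlim 0).abs.const_mul 2

/-- The `+ s` keeps the square root positive when `σ = ±1`. -/
noncomputable def approachCurve (σ s : ℝ) : En 2 := !₂[s, -(σ * s ^ 2 / √(1 - σ ^ 2 + s))]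

lemma gradient_negSqrtQuartic_approachCurve_one {σ s : ℝ} (hσ : σ ^ 2 ≤ 1) (hs : 0 < s) :
    gradient negSqrtQuartic (approachCurve σ s) 1 = σ / √(1 + s) := by
  have hc : 0 < √(1 - σ ^ 2 + s) := Real.sqrt_pos.2 (by linarith)
  have hc2 : √(1 - σ ^ 2 + s) ^ 2 = 1 - σ ^ 2 + s := Real.sq_sqrt (by linarith)
  have hq : s ^ 4 + (-(σ * s ^ 2 / √(1 - σ ^ 2 + s))) ^ 2
      = (s ^ 2 / √(1 - σ ^ 2 + s)) ^ 2 * (1 + s) := by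
    field_simp
    rw [hc2]
    ring
  rw [gradient_negSqrtQuartic hs.ne']
  simp only [approachCurve, PiLp.toLp_apply, Matrix.cons_val_zero, Matrix.cons_val_one]
  rw [hq, Real.sqrt_mul (sq_nonneg _), Real.sqrt_sq (by positivity)]
  have : √(1 + s) ≠ 0 := by positivity
  field_simp

lemma abs_approachCurve_one_le {σ s : ℝ} (hσ : σ ^ 2 ≤ 1) (hs : 0 < s) :
    |approachCurve σ s 1| ≤ s * √s := by
  have hσ1 : |σ| ≤ 1 := by rwa [← sq_le_one_iff_abs_le_one]
  have hc : √s ≤ √(1 - σ ^ 2 + s) := Real.sqrt_le_sqrt (by linarith)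
  have hs' : 0 < √s := Real.sqrt_pos.2 hs
  simp only [approachCurve, PiLp.toLp_apply, Matrix.cons_val_one, Matrix.cons_val_zero]
  rw [abs_neg, abs_div, abs_mul, abs_of_nonneg (Real.sqrt_nonneg _),
    abs_of_pos (by positivity : 0 < s ^ 2), div_le_iff₀ (hs'.trans_le hc)]
  calc |σ| * s ^ 2 ≤ s * √s * √s := by
        rw [mul_assoc, Real.mul_self_sqrt hs.le]; nlinarith [sq_nonneg s]
    _ ≤ s * √s * √(1 - σ ^ 2 + s) := by gcongr

lemma tendsto_approachCurve {σ : ℝ} (hσ : σ ^ 2 ≤ 1) :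
    Tendsto (approachCurve σ) (𝓝[>] 0) (𝓝 0) := by
  rw [tendsto_euclideanSpace_iff, Fin.forall_fin_two]
  have hid : Tendsto (fun s : ℝ => s) (𝓝[>] 0) (𝓝 0) := nhdsWithin_le_nhds
  simp only [WithLp.ofLp_zero, Pi.zero_apply]
  refine ⟨by simpa [approachCurve] using hid, squeeze_zero_norm' (a := fun s => s * √s) ?_ ?_⟩
  · filter_upwards [self_mem_nhdsWithin] with s hs using abs_approachCurve_one_le hσ hs
  · simpa using hid.mul hid.sqrt

lemma tendsto_gradient_negSqrtQuartic_approachCurve {σ : ℝ} (hσ : σ ^ 2 ≤ 1) :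
    Tendsto (fun s => gradient negSqrtQuartic (approachCurve σ s)) (𝓝[>] 0) (𝓝 !₂[0, σ]) := by
  rw [tendsto_euclideanSpace_iff, Fin.forall_fin_two]
  have hid : Tendsto (fun s : ℝ => s) (𝓝[>] 0) (𝓝 0) := nhdsWithin_le_nhds
  constructor
  · refine squeeze_zero_norm' ?_ (by simpa using hid.abs.const_mul 2)
    filter_upwards [self_mem_nhdsWithin] with s (hs : 0 < s)
    simpa [approachCurve] using
      abs_gradient_negSqrtQuartic_zero_le (x := approachCurve σ s) hs.ne'
  · have hlim : Tendsto (fun s => σ / √(1 + s)) (𝓝[>] 0) (𝓝 σ) := by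
      simpa [Pi.div_def] using tendsto_const_nhds.div (hid.const_add 1).sqrt (by simp)
    refine hlim.congr' ?_
    filter_upwards [self_mem_nhdsWithin] with s hs
    exact (gradient_negSqrtQuartic_approachCurve_one hσ hs).symm

lemma mem_reachGrad_negSqrtQuartic {Ω : Set (En 2)} (hΩ : {x : En 2 | 0 < x 0 ∧ ‖x‖ < 1} ⊆ Ω)
    {σ : ℝ} (hσ : σ ∈ Icc (-1) 1) : !₂[0, σ] ∈ reachGrad Ω negSqrtQuartic 0 := by
  have hσ2 : σ ^ 2 ≤ 1 := sq_le_one_iff_abs_le_one σ |>.2 (abs_le.2 hσ)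
  have hs : Tendsto (fun k : ℕ => 1 / ((k : ℝ) + 1)) atTop (𝓝[>] 0) :=
    tendsto_nhdsWithin_iff.2
      ⟨tendsto_one_div_add_atTop_nhds_zero_nat, Eventually.of_forall fun _ => mem_Ioi.2 Nat.one_div_pos_of_nat⟩
  have hcurve := (tendsto_approachCurve hσ2).comp hs
  refine mem_reachGrad_of_tendsto_s16 ?_ hcurve
    ((tendsto_gradient_negSqrtQuartic_approachCurve hσ2).comp hs)
  filter_upwards [hcurve.eventually (ball_mem_nhds 0 one_pos)] with k hk
  have hpos : 0 < approachCurve σ (1 / ((k : ℝ) + 1)) 0 := Nat.one_div_pos_of_nat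
  exact ⟨hΩ ⟨hpos, mem_ball_zero_iff.1 hk⟩,
    (hasGradientAt_negSqrtQuartic (by positivity)).differentiableAt⟩

lemma convex_zero_prod_Icc :
    Convex ℝ {p : En 2 | p 0 = 0 ∧ p 1 ∈ Icc (-1 : ℝ) 1} :=
  (convex_hyperplane (EuclideanSpace.proj (0 : Fin 2) : En 2 →L[ℝ] ℝ).toLinearMap.isLinear 0).inter
    ((convex_Icc (-1 : ℝ) 1).linear_preimage
      (EuclideanSpace.proj (1 : Fin 2) : En 2 →L[ℝ] ℝ).toLinearMap)

theorem stmt16_general {Ω : Set (En 2)}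
    (hsub : Ω ⊆ {x : En 2 | 0 < x 0})
    (hsup : {x : En 2 | 0 < x 0 ∧ ‖x‖ < 1} ⊆ Ω) :
    reachGrad Ω (fun x => -Real.sqrt ((x 0) ^ 4 + (x 1) ^ 2)) 0
        = {p : En 2 | p 0 = 0 ∧ p 1 ∈ Set.Icc (-1 : ℝ) 1} ∧
      convexHull ℝ (reachGrad Ω (fun x => -Real.sqrt ((x 0) ^ 4 + (x 1) ^ 2)) 0)
          \ reachGrad Ω (fun x => -Real.sqrt ((x 0) ^ 4 + (x 1) ^ 2)) 0 = ∅ := by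
  have hD : reachGrad Ω (fun x => -Real.sqrt ((x 0) ^ 4 + (x 1) ^ 2)) 0
      = {p : En 2 | p 0 = 0 ∧ p 1 ∈ Set.Icc (-1 : ℝ) 1} := by
    refine (reachGrad_negSqrtQuartic_subset fun x hx => (hsub hx).ne').antisymm ?_
    rintro p ⟨hp0, hp1⟩
    have hp : p = !₂[0, p 1] := by
      ext i
      fin_cases i <;> simp [hp0]
    exact hp ▸ mem_reachGrad_negSqrtQuartic hsup hp1
  rw [hD, convex_zero_prod_Icc.convexHull_eq, sdiff_self]
  exact ⟨rfl, rfl⟩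

theorem stmt16 {Ω : Set (En 2)} (hΩ : IsOpen Ω)
    (hsub : Ω ⊆ {x : En 2 | 0 < x 0})
    (hsup : {x : En 2 | 0 < x 0 ∧ ‖x‖ < 1} ⊆ Ω) :
    reachGrad Ω (fun x => -Real.sqrt ((x 0) ^ 4 + (x 1) ^ 2)) 0
        = {p : En 2 | p 0 = 0 ∧ p 1 ∈ Set.Icc (-1 : ℝ) 1} ∧
      convexHull ℝ (reachGrad Ω (fun x => -Real.sqrt ((x 0) ^ 4 + (x 1) ^ 2)) 0)
          \ reachGrad Ω (fun x => -Real.sqrt ((x 0) ^ 4 + (x 1) ^ 2)) 0 = ∅ :=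
  stmt16_general hsub hsup
end
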